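/- For every x ≥ 0, the function y ↦ k_J(x,y) is a probability density on [0,∞), i.e. ∫₀^∞ k_J(x,y) dy = 1, and its mean is ∫₀^∞ y · k_J(x,y) dy = x + ηJ/2. -/

import Mathlib

/-!
The series defining `k_J(x, ·)` is a Poisson mixture of Gamma densities:
`k_J(x,y) = Σₙ e^{-λ} λⁿ/n! · γ_{n+η, 2/J}(y)` with `λ = 2x/J`, where `γ_{a,r} = gammaPDFReal a r`
is the Gamma density of shape `a` and rate `r`. All terms are nonnegative, so the series may be
integrated termwise. Each Gamma density has mass `1` and mean `a/r`, hence the mixture has mass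
`Σₙ e^{-λ} λⁿ/n! = 1` and mean `Σₙ e^{-λ} λⁿ/n! · (n + η) J/2 = (λ + η) J/2 = x + ηJ/2`.
-/

/-- The transition kernel
`k_J(x,y) = (2/J) e^{−2(x+y)/J} Σ_{n≥0} 2^{2n+η−1} xⁿ y^{n+η−1} / (J^{2n+η−1} n! Γ(n+η))`,
which for `x > 0` equals `(2/J) (y/x)^{(η−1)/2} e^{−2(x+y)/J} I_{η−1}(4√(xy)/J)`. -/
noncomputable def besselKernel (η J x y : ℝ) : ℝ :=
  (2 / J) * Real.exp (-2 * (x + y) / J) *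
    ∑' n : ℕ, (2:ℝ) ^ (2 * (n:ℝ) + η - 1) * x ^ n * y ^ ((n:ℝ) + η - 1) /
      (J ^ (2 * (n:ℝ) + η - 1) * (n.factorial : ℝ) * Real.Gamma ((n:ℝ) + η))

open MeasureTheory Set Real ProbabilityTheory
open scoped Nat

/-- Poisson weights with a real rate (Mathlib's `poissonMeasure` takes its rate in `ℝ≥0`). -/
noncomputable def poissonWeight (t : ℝ) (n : ℕ) : ℝ := exp (-t) * t ^ n / n !

lemma poissonWeight_nonneg {t : ℝ} (ht : 0 ≤ t) (n : ℕ) : 0 ≤ poissonWeight t n := by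
  unfold poissonWeight
  positivity

lemma hasSum_poissonWeight (t : ℝ) : HasSum (poissonWeight t) 1 := by
  have h := (NormedSpace.expSeries_div_hasSum_exp t).mul_left (exp (-t))
  rw [← exp_eq_exp_ℝ, ← exp_add, neg_add_cancel, exp_zero] at h
  unfold poissonWeight
  simpa only [mul_div_assoc] using h

lemma hasSum_natCast_mul_poissonWeight (t : ℝ) :
    HasSum (fun n : ℕ => n * poissonWeight t n) t := by
  rw [← hasSum_nat_add_iff' 1]
  have hshift : ∀ n : ℕ, ((n : ℝ) + 1) * poissonWeight t (n + 1) = t * poissonWeight t n := by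
    intro n
    simp only [poissonWeight, Nat.factorial_succ, pow_succ]
    push_cast
    field_simp
  simpa [hshift] using (hasSum_poissonWeight t).mul_left t

lemma hasSum_poissonWeight_mul_natCast_add (t c : ℝ) :
    HasSum (fun n : ℕ => poissonWeight t n * (n + c)) (t + c) := by
  have h := (hasSum_natCast_mul_poissonWeight t).add ((hasSum_poissonWeight t).mul_left c)
  rw [mul_one] at h
  convert h using 1
  funext n
  ring

lemma integral_tsum_of_nonneg_of_hasSum {ι α : Type*} [Countable ι] [MeasurableSpace α]
    {μ : Measure α} {F : ι → α → ℝ} (hF_nonneg : ∀ i, 0 ≤ᵐ[μ] F i)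
    (hF_int : ∀ i, Integrable (F i) μ) {s : ℝ} (hs : HasSum (fun i => ∫ a, F i a ∂μ) s) :
    ∫ a, ∑' i, F i a ∂μ = s := by
  have hnorm : ∀ i, ∫ a, ‖F i a‖ ∂μ = ∫ a, F i a ∂μ := fun i =>
    integral_congr_ae ((hF_nonneg i).mono fun a ha => Real.norm_of_nonneg ha)
  exact (hasSum_integral_of_summable_integral_norm hF_int
    (by simpa only [hnorm] using hs.summable)).unique hs

section GammaDensity

variable {a r : ℝ}

lemma integral_gammaPDFReal_Ioi (ha : 0 < a) (hr : 0 < r) :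
    ∫ y in Ioi 0, gammaPDFReal a r y = 1 := by
  rw [setIntegral_congr_fun measurableSet_Ioi fun y (hy : 0 < y) =>
    show gammaPDFReal a r y = _ from if_pos hy.le]
  simp_rw [mul_assoc]
  rw [integral_const_mul, integral_rpow_mul_exp_neg_mul_Ioi ha hr, div_rpow zero_le_one hr.le,
    one_rpow]
  have := (Gamma_pos_of_pos ha).ne'
  have := (rpow_pos_of_pos hr a).ne'
  field_simp

lemma mul_gammaPDFReal (ha : 0 < a) (hr : 0 < r) (y : ℝ) :
    y * gammaPDFReal a r y = a / r * gammaPDFReal (a + 1) r y := by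
  unfold gammaPDFReal
  split_ifs with hy
  · have hya : y ^ a = y * y ^ (a - 1) := by
      rw [← rpow_one_add' hy (by linarith), add_sub_cancel]
    rw [Gamma_add_one ha.ne', rpow_add_one hr.ne', add_sub_cancel_right, hya]
    have := (Gamma_pos_of_pos ha).ne'
    have := ha.ne'
    field_simp
  · simp

lemma integral_mul_gammaPDFReal_Ioi (ha : 0 < a) (hr : 0 < r) :
    ∫ y in Ioi 0, y * gammaPDFReal a r y = a / r := by
  simp_rw [mul_gammaPDFReal ha hr]
  rw [integral_const_mul, integral_gammaPDFReal_Ioi (by linarith) hr, mul_one]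

variable {w a : ℕ → ℝ} (hw : ∀ n, 0 ≤ w n) (ha : ∀ n, 0 < a n) (hr : 0 < r)
include hw ha hr

lemma integral_tsum_mul_gammaPDFReal {s : ℝ} (hs : HasSum w s) :
    ∫ y in Ioi 0, ∑' n, w n * gammaPDFReal (a n) r y = s := by
  refine integral_tsum_of_nonneg_of_hasSum (fun n => ?_) (fun n => ?_) ?_
  · exact ae_of_all _ fun y => mul_nonneg (hw n) (gammaPDFReal_nonneg (ha n) hr y)
  · refine (Integrable.of_integral_ne_zero ?_).const_mul _
    rw [integral_gammaPDFReal_Ioi (ha n) hr]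
    exact one_ne_zero
  · simpa only [integral_const_mul, integral_gammaPDFReal_Ioi (ha _) hr, mul_one] using hs

lemma integral_mul_tsum_mul_gammaPDFReal {m : ℝ} (hm : HasSum (fun n => w n * a n) m) :
    ∫ y in Ioi 0, y * ∑' n, w n * gammaPDFReal (a n) r y = m / r := by
  simp_rw [← tsum_mul_left, mul_left_comm _ (w _)]
  refine integral_tsum_of_nonneg_of_hasSum (fun n => ?_) (fun n => ?_) ?_
  · refine ae_of_all _ fun y => mul_nonneg (hw n) ?_
    rw [mul_gammaPDFReal (ha n) hr]
    exact mul_nonneg (div_pos (ha n) hr).le (gammaPDFReal_nonneg (by linarith [ha n]) hr y)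
  · refine (Integrable.of_integral_ne_zero ?_).const_mul _
    rw [integral_mul_gammaPDFReal_Ioi (ha n) hr]
    exact (div_pos (ha n) hr).ne'
  · simpa only [integral_const_mul, integral_mul_gammaPDFReal_Ioi (ha _) hr, mul_div_assoc]
      using hm.div_const r

end GammaDensity

lemma besselKernel_eq_tsum {η J x y : ℝ} (hJ : 0 < J) (hy : 0 ≤ y) :
    besselKernel η J x y =
      ∑' n : ℕ, poissonWeight (2 * x / J) n * gammaPDFReal (n + η) (2 / J) y := by
  rw [besselKernel, ← tsum_mul_left]
  refine tsum_congr fun n => ?_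
  have h2J : 0 < 2 / J := by positivity
  have hpow : 2 / J * ((2 : ℝ) ^ (2 * (n : ℝ) + η - 1) / J ^ (2 * (n : ℝ) + η - 1)) =
      (2 / J) ^ n * (2 / J) ^ ((n : ℝ) + η) := by
    rw [← div_rpow zero_le_two hJ.le, ← rpow_natCast, ← rpow_add h2J, mul_comm,
      ← rpow_add_one h2J.ne']
    ring_nf
  simp only [poissonWeight, gammaPDFReal, if_pos hy]
  rw [show -2 * (x + y) / J = -(2 * x / J) + -(2 / J * y) by ring, exp_add]
  linear_combination (exp (-(2 * x / J)) * exp (-(2 / J * y)) * x ^ n * y ^ ((n : ℝ) + η - 1) /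
    (n ! * Gamma (n + η))) * hpow

/-- For every `x ≥ 0`, `y ↦ k_J(x,y)` is a probability density on `[0,∞)` with mean
`x + ηJ/2`. -/
theorem besselKernel_integral_one_and_mean
    (η J : ℝ) (hη : 1 < η) (hJ : 0 < J) (x : ℝ) (hx : 0 ≤ x) :
    (∫ y in Set.Ici (0:ℝ), besselKernel η J x y) = 1 ∧
    (∫ y in Set.Ici (0:ℝ), y * besselKernel η J x y) = x + η * J / 2 := by
  have hk : ∀ y ∈ Ioi (0 : ℝ), besselKernel η J x y =
      ∑' n : ℕ, poissonWeight (2 * x / J) n * gammaPDFReal (n + η) (2 / J) y :=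
    fun y hy => besselKernel_eq_tsum hJ (le_of_lt hy)
  have hw := poissonWeight_nonneg (by positivity : 0 ≤ 2 * x / J)
  have ha : ∀ n : ℕ, 0 < (n : ℝ) + η := fun n => by positivity
  have hr : 0 < 2 / J := by positivity
  rw [integral_Ici_eq_integral_Ioi, integral_Ici_eq_integral_Ioi,
    setIntegral_congr_fun measurableSet_Ioi hk,
    setIntegral_congr_fun measurableSet_Ioi fun y hy => congrArg (y * ·) (hk y hy)]
  refine ⟨integral_tsum_mul_gammaPDFReal hw ha hr (hasSum_poissonWeight _), ?_⟩
  rw [integral_mul_tsum_mul_gammaPDFReal hw ha hr (hasSum_poissonWeight_mul_natCast_add _ η)]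
  field_simp
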